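/- For PathNim PN(5,3) (five stacks on a path; a move removes at least one token total from three consecutive stacks {1,2,3}, {2,3,4}, or {3,4,5}), the set of P-positions is exactly the set of positions having two consecutive zeros in the middle such that the sums on the two sides are equal: namely positions of the form (a, 0, 0, b₁, b₂) with a = b₁ + b₂, or (a₁, a₂, 0, 0, b) with a₁ + a₂ = b. -/

import Mathlib

/-- A legal move in SetNim: at least one stack strictly decreases, all changed
stacks lie in some allowed move set, stacks weakly decrease. -/
def Move {V : Type} (A : Set (Set V)) (p q : V → ℕ) : Prop :=
  q ≠ p ∧ (∀ i, q i ≤ p i) ∧ ∃ a ∈ A, ∀ i, q i ≠ p i → i ∈ a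

/-- P-positions: positions all of whose options are N-positions. -/
def PPos {V : Type} [Fintype V] (A : Set (Set V)) (p : V → ℕ) : Prop :=
  ∀ q, Move A p q → ¬ PPos A q
termination_by Finset.univ.sum p
decreasing_by
  rename_i hq
  obtain ⟨hne, hle, -⟩ := hq
  refine Finset.sum_lt_sum (fun i _ => hle i) ?_
  obtain ⟨i, hi⟩ := Function.ne_iff.mp hne
  exact ⟨i, Finset.mem_univ i, lt_of_le_of_ne (hle i) hi⟩

/-- Move sets of PathNim PN(5,3). -/
def PN53 : Set (Set (Fin 5)) := {{0, 1, 2}, {1, 2, 3}, {2, 3, 4}}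

/-! The balanced positions `(a, 0, 0, b₁, b₂)` with `a = b₁ + b₂` and `(a₁, a₂, 0, 0, b)` with
`a₁ + a₂ = b` (stacks indexed from 0) form a kernel of the move graph. No move joins two of them: a
balanced position below `p` that agrees with `p` outside a window of three stacks is `p` itself. Every
other position moves to one, by emptying stacks 1, 2 and lowering stack 0 (if `p 3 + p 4 ≤ p 0`), by
emptying stacks 2, 3 and lowering stack 4 (if `p 0 + p 1 ≤ p 4`), or otherwise by a move in the
middle window. -/

open Finset

theorem Move.sum_lt {V : Type} [Fintype V] {A : Set (Set V)} {p q : V → ℕ} (h : Move A p q) :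
    ∑ i, q i < ∑ i, p i := by
  obtain ⟨hne, hle, -⟩ := h
  obtain ⟨i, hi⟩ := Function.ne_iff.mp hne
  exact sum_lt_sum (fun i _ => hle i) ⟨i, mem_univ i, (hle i).lt_of_ne hi⟩

theorem ppos_iff_mem_of_independent_of_absorbing {V : Type} [Fintype V] {A : Set (Set V)}
    {S : Set (V → ℕ)} (independent : ∀ p ∈ S, ∀ q, Move A p q → q ∉ S)
    (absorbing : ∀ p ∉ S, ∃ q ∈ S, Move A p q) (p : V → ℕ) : PPos A p ↔ p ∈ S := by
  induction hn : ∑ i, p i using Nat.strong_induction_on generalizing p with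
  | _ n ih =>
  have ih_move : ∀ q, Move A p q → (PPos A q ↔ q ∈ S) :=
    fun q hq => ih _ (hn ▸ hq.sum_lt) q rfl
  rw [PPos]
  constructor
  · intro hP
    by_contra hpS
    obtain ⟨q, hqS, hq⟩ := absorbing p hpS
    exact hP q hq ((ih_move q hq).2 hqS)
  · exact fun hpS q hq hPq => independent p hpS q hq ((ih_move q hq).1 hPq)

def AgreeOffPN53Window (p q : Fin 5 → ℕ) : Prop :=
  (q 3 = p 3 ∧ q 4 = p 4) ∨ (q 0 = p 0 ∧ q 4 = p 4) ∨ (q 0 = p 0 ∧ q 1 = p 1)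

theorem move_pn53_iff {p q : Fin 5 → ℕ} :
    Move PN53 p q ↔ q ≠ p ∧ (∀ i, q i ≤ p i) ∧ AgreeOffPN53Window p q := by
  simp [Move, PN53, AgreeOffPN53Window, Fin.forall_fin_succ]

def pn53Balanced : Set (Fin 5 → ℕ) :=
  {p | (p 1 = 0 ∧ p 2 = 0 ∧ p 0 = p 3 + p 4) ∨ (p 2 = 0 ∧ p 3 = 0 ∧ p 0 + p 1 = p 4)}

theorem eq_of_mem_pn53Balanced {p q : Fin 5 → ℕ} (hp : p ∈ pn53Balanced)
    (hq : q ∈ pn53Balanced) (hle : ∀ i, q i ≤ p i) (hwindow : AgreeOffPN53Window p q) : q = p := by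
  have := hle 0; have := hle 1; have := hle 2; have := hle 3; have := hle 4
  simp only [pn53Balanced, Set.mem_ofPred_eq] at hp hq
  unfold AgreeOffPN53Window at hwindow
  funext i
  fin_cases i <;> dsimp <;> omega

theorem exists_move_pn53_mem_pn53Balanced {p : Fin 5 → ℕ} (hp : p ∉ pn53Balanced) :
    ∃ q ∈ pn53Balanced, Move PN53 p q := by
  suffices ∃ q ∈ pn53Balanced, (∀ i, q i ≤ p i) ∧ AgreeOffPN53Window p q by
    obtain ⟨q, hq, hle, hwindow⟩ := this
    exact ⟨q, hq, move_pn53_iff.2 ⟨fun h => hp (h ▸ hq), hle, hwindow⟩⟩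
  by_cases hleft : p 3 + p 4 ≤ p 0
  · refine ⟨![p 3 + p 4, 0, 0, p 3, p 4], by simp [pn53Balanced], ?_,
      by simp [AgreeOffPN53Window]⟩
    intro i; fin_cases i <;> simp [hleft]
  by_cases hright : p 0 + p 1 ≤ p 4
  · refine ⟨![p 0, p 1, 0, 0, p 0 + p 1], by simp [pn53Balanced], ?_,
      by simp [AgreeOffPN53Window]⟩
    intro i; fin_cases i <;> simp [hright]
  rcases le_or_gt (p 4) (p 0) with h | h
  · refine ⟨![p 0, 0, 0, p 0 - p 4, p 4], by simp [pn53Balanced]; omega, ?_,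
      by simp [AgreeOffPN53Window]⟩
    intro i; fin_cases i <;> simp; omega
  · refine ⟨![p 0, p 4 - p 0, 0, 0, p 4], by simp [pn53Balanced]; omega, ?_,
      by simp [AgreeOffPN53Window]⟩
    intro i; fin_cases i <;> simp; omega

/-- the P-positions of PN(5,3) are exactly the positions
(a,0,0,b₁,b₂) with a = b₁+b₂ or (a₁,a₂,0,0,b) with a₁+a₂ = b. -/
theorem pn53_ppos (p : Fin 5 → ℕ) :
    PPos PN53 p ↔
      (p 1 = 0 ∧ p 2 = 0 ∧ p 0 = p 3 + p 4) ∨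
      (p 2 = 0 ∧ p 3 = 0 ∧ p 0 + p 1 = p 4) := by
  refine ppos_iff_mem_of_independent_of_absorbing (fun r hr q hq hqS => ?_)
    (fun p hp => exists_move_pn53_mem_pn53Balanced hp) p
  obtain ⟨hne, hle, hwindow⟩ := move_pn53_iff.1 hq
  exact hne (eq_of_mem_pn53Balanced hr hqS hle hwindow)
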